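/- For every group Γ and every nonzero exact bounded cohomology class α ∈ EH^2_b(Γ) of degree 2, one has ‖α‖_bah = ∞. Equivalently: if α ∈ EH^2_b(Γ) satisfies ‖α‖_bah < ∞, then α = 0, i.e. every invariant 2-cochain representing α is the coboundary of a bounded invariant 1-cochain up to coboundary. -/

import Mathlib

set_option linter.unusedSectionVars false
set_option linter.unusedVariables false

open scoped ENNReal

namespace BddCoh

variable (G : Type*) [Group G]

/-- Homogeneous real `n`-cochains on `G`: functions `G^{n+1} → ℝ`. -/
abbrev Cochain (n : ℕ) : Type _ := (Fin (n + 1) → G) → ℝ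

variable {G}

/-- Invariance of a homogeneous cochain under the diagonal left translation action. -/
def IsInvariant {n : ℕ} (φ : Cochain G n) : Prop :=
  ∀ (g : G) (x : Fin (n + 1) → G), φ (fun i => g * x i) = φ x

/-- Boundedness of a cochain. -/
def IsBoundedC {n : ℕ} (φ : Cochain G n) : Prop :=
  ∃ C : ℝ, ∀ x, |φ x| ≤ C

/-- The sup-norm of a cochain, valued in `[0,∞]`. -/
noncomputable def snorm {n : ℕ} (φ : Cochain G n) : ℝ≥0∞ :=
  ⨆ x : Fin (n + 1) → G, ENNReal.ofReal |φ x|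

/-- The homogeneous differential. -/
noncomputable def delta {n : ℕ} : Cochain G n →ₗ[ℝ] Cochain G (n + 1) where
  toFun φ := fun x => ∑ i : Fin (n + 2), (-1 : ℝ) ^ (i : ℕ) * φ (fun j => x (i.succAbove j))
  map_add' φ ψ := by
    funext x
    simp [mul_add, Finset.sum_add_distrib]
  map_smul' c φ := by
    funext x
    simp only [Pi.smul_apply, smul_eq_mul, RingHom.id_apply]
    rw [Finset.mul_sum]
    exact Finset.sum_congr rfl fun i _ => by ring

lemma IsInvariant.add {n : ℕ} {φ ψ : Cochain G n} (h1 : IsInvariant φ) (h2 : IsInvariant ψ) :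
    IsInvariant (φ + ψ) := fun g x => by
  simp only [Pi.add_apply, h1 g x, h2 g x]

lemma IsInvariant.smul {n : ℕ} (c : ℝ) {φ : Cochain G n} (h : IsInvariant φ) :
    IsInvariant (c • φ) := fun g x => by
  simp only [Pi.smul_apply, h g x]

lemma IsInvariant.zero {n : ℕ} : IsInvariant (0 : Cochain G n) := fun _ _ => rfl

lemma IsBoundedC.add {n : ℕ} {φ ψ : Cochain G n} : IsBoundedC φ → IsBoundedC ψ →
    IsBoundedC (φ + ψ)
  | ⟨C, hC⟩, ⟨D, hD⟩ => ⟨C + D, fun x => (abs_add_le (φ x) (ψ x)).trans (add_le_add (hC x) (hD x))⟩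

lemma IsBoundedC.smul {n : ℕ} (c : ℝ) {φ : Cochain G n} : IsBoundedC φ → IsBoundedC (c • φ)
  | ⟨C, hC⟩ => ⟨|c| * C, fun x => by
      have h : |(c • φ) x| = |c| * |φ x| := by
        simp [abs_mul]
      rw [h]
      exact mul_le_mul_of_nonneg_left (hC x) (abs_nonneg c)⟩

lemma IsBoundedC.zero {n : ℕ} : IsBoundedC (0 : Cochain G n) := ⟨0, fun x => by simp⟩

variable (G)

/-- The bounded invariant cocycles in degree `n`. -/
noncomputable def Zb (n : ℕ) : Submodule ℝ (Cochain G n) where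
  carrier := {z | IsBoundedC z ∧ IsInvariant z ∧ delta z = 0}
  add_mem' := by
    rintro a b ⟨hba, hia, hda⟩ ⟨hbb, hib, hdb⟩
    exact ⟨hba.add hbb, hia.add hib, by rw [map_add, hda, hdb, add_zero]⟩
  zero_mem' := ⟨IsBoundedC.zero, IsInvariant.zero, map_zero _⟩
  smul_mem' := by
    rintro c a ⟨hb, hi, hd⟩
    exact ⟨hb.smul c, hi.smul c, by rw [map_smul, hd, smul_zero]⟩

variable {G}

/-- Being the coboundary of a bounded invariant cochain (with the convention `C^{-1} = 0`). -/
def IsCobdry : ∀ {n : ℕ}, Cochain G n → Prop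
  | 0, ψ => ψ = 0
  | n + 1, ψ => ∃ φ : Cochain G n, IsBoundedC φ ∧ IsInvariant φ ∧ delta φ = ψ

lemma IsCobdry.add : ∀ {n : ℕ} {a b : Cochain G n}, IsCobdry a → IsCobdry b → IsCobdry (a + b)
  | 0, a, b, ha, hb => by
      show a + b = 0
      rw [show a = 0 from ha, show b = 0 from hb, add_zero]
  | n + 1, a, b, ⟨φ, h1, h2, h3⟩, ⟨ψ, g1, g2, g3⟩ =>
      ⟨φ + ψ, h1.add g1, h2.add g2, by rw [map_add, h3, g3]⟩

lemma IsCobdry.smul : ∀ {n : ℕ} (c : ℝ) {a : Cochain G n}, IsCobdry a → IsCobdry (c • a)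
  | 0, c, a, ha => by
      show c • a = 0
      rw [show a = 0 from ha, smul_zero]
  | n + 1, c, a, ⟨φ, h1, h2, h3⟩ => ⟨c • φ, h1.smul c, h2.smul c, by rw [map_smul, h3]⟩

lemma IsCobdry.zero : ∀ {n : ℕ}, IsCobdry (0 : Cochain G n)
  | 0 => rfl
  | n + 1 => ⟨0, IsBoundedC.zero, IsInvariant.zero, map_zero _⟩

variable (G)

/-- The coboundaries, as a submodule of the cocycles. -/
noncomputable def Bb (n : ℕ) : Submodule ℝ (Zb G n) where
  carrier := {z | IsCobdry (z : Cochain G n)}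
  add_mem' := by
    intro a b ha hb
    show IsCobdry ((a + b : Zb G n) : Cochain G n)
    rw [Submodule.coe_add]
    exact ha.add hb
  zero_mem' := by
    show IsCobdry ((0 : Zb G n) : Cochain G n)
    rw [ZeroMemClass.coe_zero]
    exact IsCobdry.zero
  smul_mem' := by
    intro c a ha
    show IsCobdry ((c • a : Zb G n) : Cochain G n)
    rw [Submodule.coe_smul]
    exact ha.smul c

/-- Bounded cohomology of `G` in degree `n` (with trivial real coefficients), computed from
the complex of bounded invariant homogeneous cochains. -/
abbrev Hb (n : ℕ) := Zb G n ⧸ Bb G n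

variable {G}

/-- The bounded cohomology class of a bounded invariant cocycle. -/
noncomputable abbrev mkH {n : ℕ} (z : Zb G n) : Hb G n := (Bb G n).mkQ z

lemma mkH_zero {n : ℕ} : mkH (0 : Zb G n) = 0 := map_zero (Bb G n).mkQ

lemma mkH_add {n : ℕ} (y z : Zb G n) : mkH (y + z) = mkH y + mkH z := map_add (Bb G n).mkQ y z

lemma mkH_smul {n : ℕ} (c : ℝ) (z : Zb G n) : mkH (c • z) = c • mkH z :=
  map_smul (Bb G n).mkQ c z

/-- The Gromov seminorm (canonical `ℓ^∞`-seminorm) on bounded cohomology, in `[0,∞]`. -/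
noncomputable def gnorm {n : ℕ} (α : Hb G n) : ℝ≥0∞ :=
  sInf {r | ∃ z : Zb G n, mkH z = α ∧ snorm (z : Cochain G n) = r}

lemma snorm_zero {n : ℕ} : snorm (0 : Cochain G n) = 0 :=
  le_antisymm (iSup_le fun x => by simp) (zero_le)

lemma snorm_add_le {n : ℕ} (φ ψ : Cochain G n) : snorm (φ + ψ) ≤ snorm φ + snorm ψ := by
  refine iSup_le fun x => ?_
  calc ENNReal.ofReal |(φ + ψ) x| ≤ ENNReal.ofReal (|φ x| + |ψ x|) :=
        ENNReal.ofReal_le_ofReal (abs_add_le (φ x) (ψ x))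
    _ = ENNReal.ofReal |φ x| + ENNReal.ofReal |ψ x| :=
        ENNReal.ofReal_add (abs_nonneg _) (abs_nonneg _)
    _ ≤ snorm φ + snorm ψ :=
        add_le_add (le_iSup (fun x => ENNReal.ofReal |φ x|) x)
          (le_iSup (fun x => ENNReal.ofReal |ψ x|) x)

lemma snorm_smul_le {n : ℕ} (c : ℝ) (φ : Cochain G n) :
    snorm (c • φ) ≤ ENNReal.ofReal |c| * snorm φ := by
  refine iSup_le fun x => ?_
  have h : |(c • φ) x| = |c| * |φ x| := by simp [abs_mul]
  rw [h, ENNReal.ofReal_mul (abs_nonneg c)]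
  exact mul_le_mul_right (le_iSup (fun x => ENNReal.ofReal |φ x|) x) _

lemma gnorm_le_snorm {n : ℕ} (z : Zb G n) : gnorm (mkH z) ≤ snorm (z : Cochain G n) :=
  sInf_le ⟨z, rfl, rfl⟩

lemma gnorm_zero {n : ℕ} : gnorm (0 : Hb G n) = 0 := by
  refine le_antisymm ?_ (zero_le)
  have h := gnorm_le_snorm (0 : Zb G n)
  rw [mkH_zero] at h
  simpa [snorm_zero] using h

lemma exists_gnorm_rep {n : ℕ} {α : Hb G n} (h : gnorm α = 0) {ε : ℝ≥0∞} (hε : 0 < ε) :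
    ∃ z : Zb G n, mkH z = α ∧ snorm (z : Cochain G n) < ε := by
  have h2 : gnorm α < ε := by rw [h]; exact hε
  rw [gnorm] at h2
  obtain ⟨r, ⟨z, hz, hr⟩, hlt⟩ := sInf_lt_iff.mp h2
  exact ⟨z, hz, hr ▸ hlt⟩

variable (G)

/-- The subspace of classes with vanishing Gromov seminorm. -/
noncomputable def NG (n : ℕ) : Submodule ℝ (Hb G n) where
  carrier := {α | gnorm α = 0}
  zero_mem' := gnorm_zero
  add_mem' := by
    intro a b ha hb
    show gnorm (a + b) = 0
    refine le_antisymm ?_ (zero_le)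
    refine ENNReal.le_of_forall_pos_le_add fun ε hε _ => ?_
    have hε2 : (0 : ℝ≥0∞) < (ε : ℝ≥0∞) / 2 :=
      ENNReal.half_pos (by exact_mod_cast hε.ne')
    obtain ⟨z₁, h₁, s₁⟩ := exists_gnorm_rep ha hε2
    obtain ⟨z₂, h₂, s₂⟩ := exists_gnorm_rep hb hε2
    have hmk : mkH (z₁ + z₂) = a + b := by rw [mkH_add, h₁, h₂]
    calc gnorm (a + b) ≤ snorm ((z₁ + z₂ : Zb G n) : Cochain G n) := hmk ▸ gnorm_le_snorm _
      _ = snorm ((z₁ : Cochain G n) + (z₂ : Cochain G n)) := by rw [Submodule.coe_add]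
      _ ≤ snorm (z₁ : Cochain G n) + snorm (z₂ : Cochain G n) := snorm_add_le _ _
      _ ≤ (ε : ℝ≥0∞) / 2 + (ε : ℝ≥0∞) / 2 := add_le_add s₁.le s₂.le
      _ = (ε : ℝ≥0∞) := ENNReal.add_halves _
      _ ≤ 0 + ε := by rw [zero_add]
  smul_mem' := by
    intro c a ha
    show gnorm (c • a) = 0
    by_cases hc : c = 0
    · subst hc
      rw [zero_smul]
      exact gnorm_zero
    refine le_antisymm ?_ (zero_le)
    refine ENNReal.le_of_forall_pos_le_add fun ε hε _ => ?_
    have hM0 : ENNReal.ofReal |c| ≠ 0 := by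
      rw [Ne, ENNReal.ofReal_eq_zero, not_le]
      exact abs_pos.mpr hc
    have hMt : ENNReal.ofReal |c| ≠ ⊤ := ENNReal.ofReal_ne_top
    have hδ : (0 : ℝ≥0∞) < (ε : ℝ≥0∞) / ENNReal.ofReal |c| :=
      ENNReal.div_pos (by exact_mod_cast hε.ne') hMt
    obtain ⟨z, hz, hs⟩ := exists_gnorm_rep ha hδ
    have hmk : mkH (c • z) = c • a := by rw [mkH_smul, hz]
    calc gnorm (c • a) ≤ snorm ((c • z : Zb G n) : Cochain G n) := hmk ▸ gnorm_le_snorm _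
      _ = snorm (c • (z : Cochain G n)) := by rw [Submodule.coe_smul]
      _ ≤ ENNReal.ofReal |c| * snorm (z : Cochain G n) := snorm_smul_le c _
      _ ≤ ENNReal.ofReal |c| * ((ε : ℝ≥0∞) / ENNReal.ofReal |c|) := mul_le_mul_right hs.le _
      _ = (ε : ℝ≥0∞) := ENNReal.mul_div_cancel hM0 hMt
      _ ≤ 0 + ε := by rw [zero_add]

variable {G}

/-- Having an invariant (possibly unbounded) primitive (with the convention `C^{-1} = 0`). -/
def HasInvPrimitive : ∀ {n : ℕ}, Cochain G n → Prop
  | 0, ψ => ψ = 0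
  | n + 1, ψ => ∃ φ : Cochain G n, IsInvariant φ ∧ delta φ = ψ

/-- A bounded cohomology class is exact if it lies in the kernel of the comparison map, i.e. if
it is represented by the coboundary of an invariant (possibly unbounded) cochain. -/
def IsExact {n : ℕ} (α : Hb G n) : Prop :=
  ∃ z : Zb G n, mkH z = α ∧ HasInvPrimitive (z : Cochain G n)

/-- Values `‖δφ‖_∞` over invariant primitives `φ` of representatives of `α` vanishing on
`S^{n}` (with the convention `C^{-1} = 0` in degree `0`). -/
def bahSet : ∀ {n : ℕ}, Set G → Hb G n → Set ℝ≥0∞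
  | 0, _, α => {r | α = 0 ∧ r = 0}
  | n + 1, S, α =>
      {r | ∃ φ : Cochain G n, IsInvariant φ ∧
        (∀ x : Fin (n + 1) → G, (∀ i, x i ∈ S) → φ x = 0) ∧
        (∃ z : Zb G (n + 1), (z : Cochain G (n + 1)) = delta φ ∧ mkH z = α) ∧
        snorm (delta φ) = r}

/-- The seminorm `‖α‖_S`. -/
noncomputable def normS {n : ℕ} (S : Set G) (α : Hb G n) : ℝ≥0∞ :=
  sInf (bahSet S α)

/-- The seminorm `‖α‖_bah = sup_S ‖α‖_S`, the supremum running over all finite `S ⊆ G`. -/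
noncomputable def bah {n : ℕ} (α : Hb G n) : ℝ≥0∞ :=
  ⨆ S : Finset G, normS (S : Set G) α

lemma normS_le {n : ℕ} {S : Set G} {α : Hb G (n + 1)} {φ : Cochain G n}
    (h1 : IsInvariant φ) (h2 : ∀ x : Fin (n + 1) → G, (∀ i, x i ∈ S) → φ x = 0)
    (h3 : ∃ z : Zb G (n + 1), (z : Cochain G (n + 1)) = delta φ ∧ mkH z = α) :
    normS S α ≤ snorm (delta φ) :=
  sInf_le ⟨φ, h1, h2, h3, rfl⟩

lemma normS_le_bah {n : ℕ} (S : Finset G) (α : Hb G n) : normS (S : Set G) α ≤ bah α :=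
  le_iSup (fun S : Finset G => normS (S : Set G) α) S

lemma bah_zero : ∀ {n : ℕ}, bah (0 : Hb G n) = 0 := by
  intro n
  refine le_antisymm (iSup_le fun S => ?_) (zero_le)
  cases n with
  | zero =>
      refine le_trans (sInf_le ?_) le_rfl
      exact ⟨rfl, rfl⟩
  | succ n =>
      have h := normS_le (α := (0 : Hb G (n + 1))) (S := (S : Set G))
        (φ := (0 : Cochain G n)) IsInvariant.zero (fun x _ => rfl)
        ⟨0, by rw [ZeroMemClass.coe_zero, map_zero], map_zero _⟩
      rw [map_zero, snorm_zero] at h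
      exact h

lemma eq_zero_of_bah_zero₀ {α : Hb G 0} (h : bah α = 0) : α = 0 := by
  by_contra hα
  have hS : normS ((∅ : Finset G) : Set G) α = ⊤ := by
    rw [normS]
    rw [show bahSet ((∅ : Finset G) : Set G) α = ∅ from ?_, sInf_empty]
    ext r
    simp only [bahSet, Set.mem_setOf_eq, Set.mem_empty_iff_false, iff_false, not_and]
    intro h0
    exact absurd h0 hα
  have := normS_le_bah (∅ : Finset G) α
  rw [hS, h] at this
  exact absurd (top_le_iff.mp this).symm (by simp)

lemma normS_eq_zero_of_bah {n : ℕ} {α : Hb G n} (h : bah α = 0) (S : Finset G) :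
    normS (S : Set G) α = 0 :=
  le_antisymm (h ▸ normS_le_bah S α) (zero_le)

lemma exists_bah_rep {n : ℕ} {α : Hb G (n + 1)} (h : bah α = 0) (S : Finset G)
    {ε : ℝ≥0∞} (hε : 0 < ε) :
    ∃ φ : Cochain G n, IsInvariant φ ∧
      (∀ x : Fin (n + 1) → G, (∀ i, x i ∈ (S : Set G)) → φ x = 0) ∧
      (∃ z : Zb G (n + 1), (z : Cochain G (n + 1)) = delta φ ∧ mkH z = α) ∧
      snorm (delta φ) < ε := by
  have h2 : normS ((S : Set G)) α < ε := by
    rw [normS_eq_zero_of_bah h S]; exact hε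
  rw [normS] at h2
  obtain ⟨r, hr, hlt⟩ := sInf_lt_iff.mp h2
  obtain ⟨φ, h1, h2', h3, h4⟩ := hr
  exact ⟨φ, h1, h2', h3, h4 ▸ hlt⟩

variable (G)

/-- The subspace `N^n_0` of exact classes with vanishing `‖·‖_bah`-seminorm. -/
noncomputable def N0 (n : ℕ) : Submodule ℝ (Hb G n) where
  carrier := {α | bah α = 0}
  zero_mem' := bah_zero
  add_mem' := by
    intro a b ha hb
    show bah (a + b) = 0
    cases n with
    | zero =>
        rw [eq_zero_of_bah_zero₀ ha, eq_zero_of_bah_zero₀ hb, add_zero]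
        exact bah_zero
    | succ n =>
        refine le_antisymm (iSup_le fun S => ?_) (zero_le)
        refine ENNReal.le_of_forall_pos_le_add fun ε hε _ => ?_
        have hε2 : (0 : ℝ≥0∞) < (ε : ℝ≥0∞) / 2 :=
          ENNReal.half_pos (by exact_mod_cast hε.ne')
        obtain ⟨φ₁, i₁, v₁, ⟨z₁, hz₁, hm₁⟩, s₁⟩ := exists_bah_rep ha S hε2
        obtain ⟨φ₂, i₂, v₂, ⟨z₂, hz₂, hm₂⟩, s₂⟩ := exists_bah_rep hb S hε2
        have hsum : normS (S : Set G) (a + b) ≤ snorm (delta (φ₁ + φ₂)) := by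
          refine normS_le (i₁.add i₂) (fun x hx => ?_) ⟨z₁ + z₂, ?_, ?_⟩
          · simp only [Pi.add_apply, v₁ x hx, v₂ x hx, add_zero]
          · rw [Submodule.coe_add, hz₁, hz₂, map_add]
          · rw [mkH_add, hm₁, hm₂]
        refine hsum.trans ?_
        calc snorm (delta (φ₁ + φ₂)) = snorm (delta φ₁ + delta φ₂) := by rw [map_add]
          _ ≤ snorm (delta φ₁) + snorm (delta φ₂) := snorm_add_le _ _
          _ ≤ (ε : ℝ≥0∞) / 2 + (ε : ℝ≥0∞) / 2 := add_le_add s₁.le s₂.le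
          _ = (ε : ℝ≥0∞) := ENNReal.add_halves _
          _ ≤ 0 + ε := by rw [zero_add]
  smul_mem' := by
    intro c a ha
    show bah (c • a) = 0
    by_cases hc : c = 0
    · subst hc
      rw [zero_smul]
      exact bah_zero
    cases n with
    | zero =>
        rw [eq_zero_of_bah_zero₀ ha, smul_zero]
        exact bah_zero
    | succ n =>
        refine le_antisymm (iSup_le fun S => ?_) (zero_le)
        refine ENNReal.le_of_forall_pos_le_add fun ε hε _ => ?_
        have hM0 : ENNReal.ofReal |c| ≠ 0 := by
          rw [Ne, ENNReal.ofReal_eq_zero, not_le]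
          exact abs_pos.mpr hc
        have hMt : ENNReal.ofReal |c| ≠ ⊤ := ENNReal.ofReal_ne_top
        have hδ : (0 : ℝ≥0∞) < (ε : ℝ≥0∞) / ENNReal.ofReal |c| :=
          ENNReal.div_pos (by exact_mod_cast hε.ne') hMt
        obtain ⟨φ, hi, hv, ⟨z, hz, hm⟩, hs⟩ := exists_bah_rep ha S hδ
        have hle : normS (S : Set G) (c • a) ≤ snorm (delta (c • φ)) := by
          refine normS_le (hi.smul c) (fun x hx => ?_) ⟨c • z, ?_, ?_⟩
          · simp only [Pi.smul_apply, hv x hx, smul_zero]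
          · rw [Submodule.coe_smul, hz, map_smul]
          · rw [mkH_smul, hm]
        refine hle.trans ?_
        calc snorm (delta (c • φ)) = snorm (c • delta φ) := by rw [map_smul]
          _ ≤ ENNReal.ofReal |c| * snorm (delta φ) := snorm_smul_le c _
          _ ≤ ENNReal.ofReal |c| * ((ε : ℝ≥0∞) / ENNReal.ofReal |c|) :=
              mul_le_mul_right hs.le _
          _ = (ε : ℝ≥0∞) := ENNReal.mul_div_cancel hM0 hMt
          _ ≤ 0 + ε := by rw [zero_add]


end BddCoh

/-!
If `‖α‖_bah < ∞`, there is `C` such that for every finite `S` the class `α` is represented by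
`δφ_S` with `φ_S` invariant, vanishing on `S²` and `|δφ_S| ≤ C`. The functions
`f_S g = φ_S(1, g)` are quasimorphisms of defect `C`, and any two of them differ by a
homomorphism plus a bounded function, because `δφ_S - δφ_T` is a bounded coboundary. Choosing
`S` containing `g ^ N`, `h ^ N`, `(g * h) ^ N` shows that the homogenization `L` of `f_∅` is
additive up to `3C / N`, hence a homomorphism. Since `f_∅ - L` is bounded, `φ_∅ - L` is a bounded
invariant primitive of `δφ_∅`, so `α = 0`.
-/

def IsQuasimorphism {M : Type*} [Mul M] (f : M → ℝ) (D : ℝ) : Prop :=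
  ∀ a b, |f (a * b) - f a - f b| ≤ D

lemma eq_zero_of_forall_natCast_mul_abs_le {t K : ℝ} (h : ∀ n : ℕ, n * |t| ≤ K) : t = 0 := by
  by_contra ht
  obtain ⟨n, hn⟩ := exists_nat_gt (K / |t|)
  rw [div_lt_iff₀ (abs_pos.2 ht)] at hn
  linarith [h n]

section QuasiadditiveSequence

variable {a : ℕ → ℝ} {D : ℝ}

lemma subadditive_add_const_of_abs_add_sub_le (ha : ∀ m n, |a (m + n) - a m - a n| ≤ D) :
    Subadditive (fun n => a n + D) := fun m n => by
  linarith [(abs_le.1 (ha m n)).2]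

lemma bddBelow_range_add_const_div_of_abs_add_sub_le
    (ha : ∀ m n, |a (m + n) - a m - a n| ≤ D) :
    BddBelow (Set.range fun n : ℕ => (a n + D) / n) := by
  have hlow : ∀ n : ℕ, n * (a 1 - D) - D ≤ a n := by
    intro n
    induction n with
    | zero =>
      have := (abs_le.1 (ha 0 0)).2
      simp only [add_zero, sub_self, zero_sub] at this
      simp only [CharP.cast_eq_zero, zero_mul, zero_sub]
      linarith
    | succ n ih =>
      push_cast
      linarith [(abs_le.1 (ha n 1)).1]
  refine ⟨min 0 (a 1 - D), ?_⟩
  rintro _ ⟨n, rfl⟩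
  rcases n.eq_zero_or_pos with rfl | hn
  · simp
  · refine (min_le_right _ _).trans ?_
    rw [le_div_iff₀ (by exact_mod_cast hn)]
    linarith [hlow n]

/-- Fekete's lemma applied to `a + D` and `-a + D`. -/
theorem exists_forall_abs_sub_natCast_mul_le_of_abs_add_sub_le
    (ha : ∀ m n, |a (m + n) - a m - a n| ≤ D) :
    ∃ L, ∀ n : ℕ, |a n - n * L| ≤ D := by
  have ha' : ∀ m n, |-a (m + n) - -a m - -a n| ≤ D := fun m n => by
    rw [← abs_neg]
    convert ha m n using 2
    ring
  have hu := subadditive_add_const_of_abs_add_sub_le ha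
  have hv := subadditive_add_const_of_abs_add_sub_le (a := fun k => -a k) ha'
  have hbu := bddBelow_range_add_const_div_of_abs_add_sub_le ha
  have hbv := bddBelow_range_add_const_div_of_abs_add_sub_le (a := fun k => -a k) ha'
  have hsum : hu.lim + hv.lim = 0 := by
    refine tendsto_nhds_unique ((hu.tendsto_lim hbu).add (hv.tendsto_lim hbv)) ?_
    refine (tendsto_const_div_atTop_nhds_zero_nat (2 * D)).congr fun n => ?_
    ring
  refine ⟨hu.lim, fun n => ?_⟩
  rcases eq_or_ne n 0 with rfl | hn
  · simpa using ha 0 0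
  have hn' : (0 : ℝ) < n := by positivity
  have hle_u := hu.lim_le_div hbu hn
  have hle_v := hv.lim_le_div hbv hn
  rw [le_div_iff₀ hn'] at hle_u hle_v
  rw [abs_le]
  constructor <;> nlinarith

end QuasiadditiveSequence

lemma map_pow_of_map_mul {M : Type*} [Monoid M] {d : M → ℝ}
    (hd : ∀ a b, d (a * b) = d a + d b) (x : M) (n : ℕ) : d (x ^ n) = n * d x := by
  induction n with
  | zero => simpa using hd 1 1
  | succ n ih =>
    rw [pow_succ, hd, ih]
    push_cast
    ring

namespace IsQuasimorphism

variable {M : Type*} [Monoid M] {f : M → ℝ} {D : ℝ}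

lemma exists_forall_abs_pow_sub_le (hf : IsQuasimorphism f D) (g : M) :
    ∃ L, ∀ n : ℕ, |f (g ^ n) - n * L| ≤ D :=
  exists_forall_abs_sub_natCast_mul_le_of_abs_add_sub_le fun m n => by
    rw [pow_add]
    exact hf _ _

lemma abs_sub_le_of_forall_abs_pow_sub_le (hf : IsQuasimorphism f D) {g : M} {a K : ℝ}
    (h : ∀ n : ℕ, |f (g ^ n) - n * a| ≤ K) : |f g - a| ≤ D := by
  obtain ⟨L, hL⟩ := hf.exists_forall_abs_pow_sub_le g
  obtain rfl : a = L := by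
    rw [← sub_eq_zero]
    refine eq_zero_of_forall_natCast_mul_abs_le (K := D + K) fun n => ?_
    calc (n : ℝ) * |a - L| = |(f (g ^ n) - n * L) - (f (g ^ n) - n * a)| := by
          rw [show (f (g ^ n) - n * L) - (f (g ^ n) - n * a) = n * (a - L) by ring, abs_mul,
            Nat.abs_cast]
      _ ≤ |f (g ^ n) - n * L| + |f (g ^ n) - n * a| := abs_sub _ _
      _ ≤ D + K := add_le_add (hL n) (h n)
  simpa using hL 1

/-- Along the powers of `x ^ N`, `f'` is at bounded distance from `n ↦ n * (N * (L - d x))`,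
and a quasimorphism lies within its defect of its homogenization; at `x ^ N` it vanishes. -/
lemma natCast_mul_abs_sub_le {f' d : M → ℝ} {D' K L : ℝ} {x : M} {N : ℕ}
    (hf' : IsQuasimorphism f' D) (hd : ∀ a b, d (a * b) = d a + d b)
    (hK : ∀ y, |f y - f' y - d y| ≤ K) (hL : ∀ n : ℕ, |f (x ^ n) - n * L| ≤ D')
    (hx : f' (x ^ N) = 0) : N * |L - d x| ≤ D := by
  have key := hf'.abs_sub_le_of_forall_abs_pow_sub_le (g := x ^ N) (a := N * (L - d x))
    (K := D' + K) fun n => by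
      rw [← pow_mul]
      calc |f' (x ^ (N * n)) - n * (N * (L - d x))|
          = |(f (x ^ (N * n)) - ↑(N * n) * L) - (f (x ^ (N * n)) - f' (x ^ (N * n))
              - d (x ^ (N * n)))| := by
            rw [map_pow_of_map_mul hd]
            push_cast
            ring_nf
        _ ≤ D' + K := (abs_sub _ _).trans (add_le_add (hL _) (hK _))
  rwa [hx, zero_sub, abs_neg, abs_mul, Nat.abs_cast] at key

end IsQuasimorphism

/-- Taking `S = {g ^ N, h ^ N, (g * h) ^ N}`, the previous estimate at `g`, `h` and `g * h`
gives `N * |L (g * h) - L g - L h| ≤ 3 * D` for every `N`. -/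
theorem map_mul_of_forall_finset_exists_isQuasimorphism_eq_zero {M : Type*} [Monoid M]
    {f L : M → ℝ} {D D' : ℝ} (hL : ∀ g (n : ℕ), |f (g ^ n) - n * L g| ≤ D')
    (happrox : ∀ S : Finset M, ∃ f' d : M → ℝ, ∃ K : ℝ, IsQuasimorphism f' D ∧
      (∀ y ∈ S, f' y = 0) ∧ (∀ a b, d (a * b) = d a + d b) ∧ ∀ y, |f y - f' y - d y| ≤ K)
    (g h : M) : L (g * h) = L g + L h := by
  classical
  rw [← sub_eq_zero, ← sub_sub]
  refine eq_zero_of_forall_natCast_mul_abs_le (K := 3 * D) fun N => ?_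
  obtain ⟨f', d, K, hf', hvan, hd, hK⟩ := happrox {g ^ N, h ^ N, (g * h) ^ N}
  have hgh := hf'.natCast_mul_abs_sub_le hd hK (hL (g * h) ·) (N := N) (hvan _ (by simp))
  have hg := hf'.natCast_mul_abs_sub_le hd hK (hL g ·) (N := N) (hvan _ (by simp))
  have hh := hf'.natCast_mul_abs_sub_le hd hK (hL h ·) (N := N) (hvan _ (by simp))
  have htri :
      |L (g * h) - L g - L h| ≤ |L (g * h) - d (g * h)| + |L g - d g| + |L h - d h| := by
    calc |L (g * h) - L g - L h| = |(L (g * h) - d (g * h)) - (L g - d g) - (L h - d h)| := by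
          rw [hd]
          ring_nf
      _ ≤ _ := (abs_sub _ _).trans (add_le_add_left (abs_sub _ _) _)
  nlinarith [mul_le_mul_of_nonneg_left htri (Nat.cast_nonneg (α := ℝ) N)]

namespace BddCoh

variable {G : Type*} [Group G]

def inhom (φ : Cochain G 1) (g : G) : ℝ := φ ![1, g]

def ofInhom (F : G → ℝ) : Cochain G 1 := fun x => F ((x 0)⁻¹ * x 1)

lemma isInvariant_ofInhom (F : G → ℝ) : IsInvariant (ofInhom F) := fun g x => by
  simp [ofInhom, mul_assoc]

lemma ofInhom_inhom {φ : Cochain G 1} (hφ : IsInvariant φ) : ofInhom (inhom φ) = φ := by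
  funext x
  rw [← hφ (x 0)⁻¹ x]
  show φ _ = φ _
  congr 1
  funext i
  fin_cases i <;> simp

lemma delta_ofInhom_apply (F : G → ℝ) (x : Fin 3 → G) :
    delta (ofInhom F) x = F ((x 1)⁻¹ * x 2) - F ((x 0)⁻¹ * x 2) + F ((x 0)⁻¹ * x 1) := by
  simp [delta, Fin.sum_univ_three, ofInhom, sub_eq_add_neg,
    show (2 : Fin 3).succAbove 1 = 1 from rfl]

lemma delta_ofInhom_eq_zero {F : G → ℝ} (hF : ∀ a b, F (a * b) = F a + F b) :
    delta (ofInhom F) = 0 := by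
  funext x
  rw [delta_ofInhom_apply, Pi.zero_apply,
    show (x 0)⁻¹ * x 2 = ((x 0)⁻¹ * x 1) * ((x 1)⁻¹ * x 2) by group, hF ((x 0)⁻¹ * x 1)]
  ring

lemma IsInvariant.isQuasimorphism_inhom {φ : Cochain G 1} (hφ : IsInvariant φ) {D : ℝ}
    (hD : ∀ x, |delta φ x| ≤ D) : IsQuasimorphism (inhom φ) D := fun a b => by
  have h := hD ![1, a, a * b]
  rw [← ofInhom_inhom hφ, delta_ofInhom_apply] at h
  rw [← abs_neg]
  convert h using 2
  simp only [Matrix.cons_val_zero, Matrix.cons_val_one, Matrix.cons_val, inv_mul_cancel_left,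
    inv_one, one_mul]
  ring

lemma IsInvariant.inhom_mul_of_delta_eq_zero {φ : Cochain G 1} (hφ : IsInvariant φ)
    (h : delta φ = 0) (a b : G) : inhom φ (a * b) = inhom φ a + inhom φ b := by
  have := hφ.isQuasimorphism_inhom (D := 0) (by simp [h]) a b
  linarith [abs_nonpos_iff.1 this]

/-- `φ` witnesses `‖α‖_S ≤ C`. -/
structure IsVanishingPrimitive {n : ℕ} (S : Set G) (C : ℝ) (α : Hb G (n + 1))
    (φ : Cochain G n) : Prop where
  isInvariant : IsInvariant φ
  eq_zero : ∀ x : Fin (n + 1) → G, (∀ i, x i ∈ S) → φ x = 0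
  represents : ∃ z : Zb G (n + 1), (z : Cochain G (n + 1)) = delta φ ∧ mkH z = α
  abs_delta_le : ∀ x, |delta φ x| ≤ C

section AnyDegree

variable {n : ℕ} {α : Hb G (n + 1)}

lemma exists_isVanishingPrimitive_of_bah_ne_top (h : bah α ≠ ⊤) :
    ∃ C : ℝ, ∀ S : Finset G, ∃ φ : Cochain G n, IsVanishingPrimitive S C α φ := by
  refine ⟨(bah α).toReal + 1, fun S => ?_⟩
  have hlt : normS (S : Set G) α < ENNReal.ofReal ((bah α).toReal + 1) := by
    calc normS (S : Set G) α ≤ bah α := normS_le_bah S α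
      _ = ENNReal.ofReal (bah α).toReal := (ENNReal.ofReal_toReal h).symm
      _ < ENNReal.ofReal ((bah α).toReal + 1) :=
        (ENNReal.ofReal_lt_ofReal_iff (by positivity)).2 (lt_add_one _)
  obtain ⟨_, ⟨φ, hinv, hvan, hrep, rfl⟩, hφ⟩ := sInf_lt_iff.mp hlt
  exact ⟨φ, hinv, hvan, hrep, fun x =>
    (ENNReal.ofReal_le_ofReal_iff (by positivity)).1 ((le_iSup _ x).trans hφ.le)⟩

lemma IsVanishingPrimitive.exists_bounded_delta_eq_sub {S S' : Set G} {C C' : ℝ}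
    {φ φ' : Cochain G n} (h : IsVanishingPrimitive S C α φ)
    (h' : IsVanishingPrimitive S' C' α φ') :
    ∃ ψ, IsBoundedC ψ ∧ IsInvariant ψ ∧ delta ψ = delta φ - delta φ' := by
  obtain ⟨z, hz, rfl⟩ := h.represents
  obtain ⟨z', hz', hzz'⟩ := h'.represents
  obtain ⟨ψ, hb, hi, hψ⟩ : IsCobdry ((z - z' : Zb G (n + 1)) : Cochain G (n + 1)) :=
    (Submodule.Quotient.eq _).1 hzz'.symm
  exact ⟨ψ, hb, hi, by rw [hψ, AddSubgroupClass.coe_sub, hz, hz']⟩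

end AnyDegree

variable {S S' : Set G} {C C' : ℝ} {α : Hb G 2} {φ φ' : Cochain G 1}

lemma IsVanishingPrimitive.isQuasimorphism_inhom (h : IsVanishingPrimitive S C α φ) :
    IsQuasimorphism (inhom φ) C :=
  h.isInvariant.isQuasimorphism_inhom h.abs_delta_le

lemma IsVanishingPrimitive.inhom_eq_zero (h : IsVanishingPrimitive S C α φ) (h1 : 1 ∈ S)
    {y : G} (hy : y ∈ S) : inhom φ y = 0 :=
  h.eq_zero _ fun i => by fin_cases i <;> simpa

lemma IsVanishingPrimitive.exists_additive_abs_inhom_sub_le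
    (h : IsVanishingPrimitive S C α φ) (h' : IsVanishingPrimitive S' C' α φ') :
    ∃ d : G → ℝ, ∃ K : ℝ, (∀ a b, d (a * b) = d a + d b) ∧
      ∀ y, |inhom φ y - inhom φ' y - d y| ≤ K := by
  obtain ⟨ψ, ⟨K, hK⟩, hψ, hδψ⟩ := h.exists_bounded_delta_eq_sub h'
  have hinv : IsInvariant (φ - φ' - ψ) := fun g x => by
    simp only [Pi.sub_apply, h.isInvariant g x, h'.isInvariant g x, hψ g x]
  have hδ : delta (φ - φ' - ψ) = 0 := by rw [map_sub, map_sub, hδψ, sub_self]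
  refine ⟨inhom (φ - φ' - ψ), K, hinv.inhom_mul_of_delta_eq_zero hδ, fun y => ?_⟩
  have hψy : inhom φ y - inhom φ' y - inhom (φ - φ' - ψ) y = ψ ![1, y] := by
    simp only [inhom, Pi.sub_apply]
    ring
  exact hψy ▸ hK _

lemma IsVanishingPrimitive.eq_zero_of_abs_inhom_sub_le (h : IsVanishingPrimitive S C α φ)
    {L : G → ℝ} (hL : ∀ a b, L (a * b) = L a + L b) {K : ℝ}
    (hK : ∀ g, |inhom φ g - L g| ≤ K) : α = 0 := by
  obtain ⟨z, hz, rfl⟩ := h.represents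
  refine (Submodule.Quotient.mk_eq_zero _).2
    ⟨ofInhom (inhom φ - L), ⟨K, fun x => hK _⟩, isInvariant_ofInhom _, ?_⟩
  rw [show ofInhom (inhom φ - L) = ofInhom (inhom φ) - ofInhom L from rfl,
    ofInhom_inhom h.isInvariant, map_sub, delta_ofInhom_eq_zero hL, sub_zero, hz]

end BddCoh

open BddCoh

theorem bah_eq_top_of_exact_ne_zero_deg_two_general (Γ : Type*) [Group Γ]
    (α : Hb Γ 2) (hne : α ≠ 0) : bah α = ⊤ := by
  by_contra hfin
  obtain ⟨C, hprim⟩ := exists_isVanishingPrimitive_of_bah_ne_top hfin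
  obtain ⟨φ₀, h₀⟩ := hprim ∅
  choose L hL using h₀.isQuasimorphism_inhom.exists_forall_abs_pow_sub_le
  have hL_mul : ∀ g h, L (g * h) = L g + L h :=
    map_mul_of_forall_finset_exists_isQuasimorphism_eq_zero hL fun S => by
      classical
      obtain ⟨φ, hφ⟩ := hprim (insert 1 S)
      obtain ⟨d, K, hd, hK⟩ := h₀.exists_additive_abs_inhom_sub_le hφ
      exact ⟨inhom φ, d, K, hφ.isQuasimorphism_inhom,
        fun y hy => hφ.inhom_eq_zero (by simp) (by simp [hy]), hd, hK⟩
  exact hne (h₀.eq_zero_of_abs_inhom_sub_le hL_mul fun g => by simpa using hL g 1)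

/-- Every nonzero exact class in degree-2 bounded cohomology has infinite `‖·‖_bah`-seminorm. -/
theorem bah_eq_top_of_exact_ne_zero_deg_two (Γ : Type*) [Group Γ]
    (α : Hb Γ 2) (hα : IsExact α) (hne : α ≠ 0) : bah α = ⊤ :=
  bah_eq_top_of_exact_ne_zero_deg_two_general Γ α hne
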